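/- Channel encoding of a rule (Theorem 1): Let the input be a vector x ∈ {-1,1}^d and let P, N ⊆ {1,...,d} be disjoint sets of positive and negated antecedents with P ∪ N nonempty. Define weights w_0 = 1, w_i = 1 for i ∈ P, w_i = -1 for i ∈ N, w_i = 0 otherwise, and define the channel activation φ = f⁺ over the nonnegative products w_i x_i (including w_0·1 = 1) plus f⁻ over the negative products. Then φ = 1 if x_i = 1 for all i ∈ P and x_i = -1 for all i ∈ N, and φ = 0 otherwise. -/
import Mathlib


/-- Theorem 1: a channel with weights built from the rule's positive
antecedents `P` and negated antecedents `N` has activation 1 on instances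
matching the rule and 0 otherwise. -/
theorem channel_encodes_rule (d : ℕ) (x : Fin d → ℝ)
    (hx : ∀ i, x i = 1 ∨ x i = -1)
    (P N : Finset (Fin d)) (hPN : Disjoint P N) (hne : (P ∪ N).Nonempty)
    (w : Fin d → ℝ)
    (hw : ∀ i, w i = if i ∈ P then (1:ℝ) else if i ∈ N then -1 else 0)
    (φ : ℝ)
    (hφ : φ =
      (1 - (1 - (1:ℝ)) * ∏ i ∈ Finset.univ.filter (fun i => 0 ≤ w i * x i),
          (1 - w i * x i)) +
      (-1 + ∏ i ∈ Finset.univ.filter (fun i => w i * x i < 0),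
          (1 + w i * x i))) :
    ((∀ i ∈ P, x i = 1) ∧ (∀ i ∈ N, x i = -1) → φ = 1) ∧
    (¬ ((∀ i ∈ P, x i = 1) ∧ (∀ i ∈ N, x i = -1)) → φ = 0) := by
  have hφ' : φ = ∏ i ∈ Finset.univ.filter (fun i => w i * x i < 0),
      (1 + w i * x i) := by rw [hφ]; ring
  constructor
  · rintro ⟨hP, hN⟩
    have hempty : Finset.univ.filter (fun i => w i * x i < 0) = ∅ := by
      rw [Finset.filter_eq_empty_iff]
      intro i _
      rw [hw i]
      by_cases hiP : i ∈ P
      · simp [hiP, hP i hiP]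
      · by_cases hiN : i ∈ N
        · simp [hiP, hiN, hN i hiN]
        · simp [hiP, hiN]
    rw [hφ', hempty, Finset.prod_empty]
  · intro h
    push_neg at h
    have : ∃ i, w i * x i = -1 := by
      by_cases hP : ∀ i ∈ P, x i = 1
      · obtain ⟨i, hiN, hxi⟩ := h hP
        have hx1 : x i = 1 := (hx i).resolve_right hxi
        have hiP : i ∉ P := fun hip => (Finset.disjoint_left.mp hPN hip) hiN
        exact ⟨i, by rw [hw i]; simp [hiP, hiN, hx1]⟩
      · push_neg at hP
        obtain ⟨i, hiP, hxi⟩ := hP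
        have hx1 : x i = -1 := (hx i).resolve_left hxi
        exact ⟨i, by rw [hw i]; simp [hiP, hx1]⟩
    obtain ⟨i, hi⟩ := this
    rw [hφ']
    apply Finset.prod_eq_zero (i := i)
    · simp [hi]
    · rw [hi]; ring
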